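/- arXiv:1907.01890 — 5 statements merged into one kernel-verified Lean document; each statement's English description precedes it below -/
import Mathlib

section
/- Let p be a prime, l ≥ 1, and q a positive integer with gcd(q, p) = 1. For each residue r with 0 < r < p, the map C_r : {0, ..., p^l − 1} → {0, ..., p^l − 1} defined by C_r(x') = ⌊(p·x' + r)^q / p⌋ mod p^l is a bijection. -/
/-!
Write `x = p x' + r`. If `C_r(x') = C_r(y')`, then `x^q` and `y^q` agree in the last digit base `p`
(both are `r^q` mod `p`) and in the next `l` digits, so `x^q ≡ y^q [MOD p^(l+1)]`. Since `p ∤ x`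
and `p ∤ q`, the cofactor `∑ x^i y^(q-1-i)` of `x - y` in `x^q - y^q` is prime to `p`, hence
`x ≡ y [MOD p^(l+1)]`, i.e. `x' ≡ y' [MOD p^l]`. An injective self-map of a finite set is
bijective.
-/

theorem Prime.pow_dvd_sub_of_pow_dvd_pow_sub_pow {R : Type*} [CommRing R] [IsDomain R]
    {p x y : R} (hp : Prime p) (hxy : p ∣ x - y) (hx : ¬p ∣ x) {n : ℕ} (hn : ¬p ∣ (n : R))
    {m : ℕ} (h : p ^ m ∣ x ^ n - y ^ n) : p ^ m ∣ x - y := by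
  rw [← geom_sum₂_mul] at h
  exact hp.pow_dvd_of_dvd_mul_left m (not_dvd_geom_sum₂ hp hxy hx hn) h

namespace Nat

theorem modEq_prime_pow_of_pow_modEq {p q a b m : ℕ} (hp : p.Prime) (hq : q.Coprime p)
    (hab : a ≡ b [MOD p]) (ha : ¬p ∣ a) (h : a ^ q ≡ b ^ q [MOD p ^ m]) :
    a ≡ b [MOD p ^ m] := by
  have hpq : ¬(p : ℤ) ∣ (q : ℤ) := mod_cast hp.coprime_iff_not_dvd.mp hq.symm
  rw [Nat.ModEq.comm, Nat.modEq_iff_dvd] at hab h ⊢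
  push_cast at h ⊢
  exact (Nat.prime_iff_prime_int.mp hp).pow_dvd_sub_of_pow_dvd_pow_sub_pow hab (mod_cast ha) hpq h

theorem modEq_mul_of_mod_eq_of_div_modEq {n m a b : ℕ} (hmod : a % n = b % n)
    (hdiv : a / n ≡ b / n [MOD m]) : a ≡ b [MOD n * m] := by
  unfold Nat.ModEq at hdiv ⊢
  rw [Nat.mod_mul, Nat.mod_mul, hmod, hdiv]

end Nat

theorem power_coding_coprime_general (p : ℕ) (hp : p.Prime) (l : ℕ)
    (q : ℕ) (hq : Nat.Coprime q p)
    (r : ℕ) (hr0 : 0 < r) (hrp : r < p) :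
    Set.BijOn (fun x' : ℕ => ((p * x' + r) ^ q / p) % p ^ l)
      (Set.Iio (p ^ l)) (Set.Iio (p ^ l)) := by
  have hp0 : 0 < p := hp.pos
  refine ((Set.finite_Iio _).injOn_iff_bijOn_of_mapsTo
    fun _ _ => Nat.mod_lt _ (by positivity)).mp ?_
  intro x' hx' y' hy' hxy
  have hlow : p * x' + r ≡ p * y' + r [MOD p] := by
    simp only [Nat.ModEq, Nat.mul_add_mod]
  have hpx : ¬p ∣ p * x' + r := by
    rw [Nat.dvd_add_right (dvd_mul_right p x')]
    exact Nat.not_dvd_of_pos_of_lt hr0 hrp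
  have hpow : (p * x' + r) ^ q ≡ (p * y' + r) ^ q [MOD p ^ (l + 1)] := by
    rw [pow_succ']
    exact Nat.modEq_mul_of_mod_eq_of_div_modEq (hlow.pow q) hxy
  have hmod : p * x' + r ≡ p * y' + r [MOD p * p ^ l] := by
    rw [← pow_succ']
    exact Nat.modEq_prime_pow_of_pow_modEq hp hq hlow hpx hpow
  exact ((hmod.add_right_cancel' r).mul_left_cancel' hp.ne_zero).eq_of_lt_of_lt hx' hy'

theorem power_coding_coprime (p : ℕ) (hp : p.Prime) (l : ℕ) (hl : 1 ≤ l)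
    (q : ℕ) (hq0 : 0 < q) (hq : Nat.Coprime q p)
    (r : ℕ) (hr0 : 0 < r) (hrp : r < p) :
    Set.BijOn (fun x' : ℕ => ((p * x' + r) ^ q / p) % p ^ l)
      (Set.Iio (p ^ l)) (Set.Iio (p ^ l)) :=
  power_coding_coprime_general p hp l q hq r hr0 hrp
end

section
/- Let p be an odd prime, l ≥ 1, and k ≥ 1. For each residue r with 0 < r < p, the map C_r : {0, ..., p^l − 1} → {0, ..., p^l − 1} defined by C_r(x') = ⌊(p·x' + r)^{p^k} / p^{k+1}⌋ mod p^l is a bijection. -/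
/-!
Write `a = p x + r`, `b = p y + r`. Since `a ≡ b [MOD p]` and `p ∤ a`, lifting the exponent gives
`v_p(a ^ p ^ k - b ^ p ^ k) = v_p(a - b) + k`. In particular `a ^ p ^ k ≡ b ^ p ^ k [MOD p ^ (k + 1)]`
always, so when the two quotients by `p ^ (k + 1)` agree modulo `p ^ l` the powers agree modulo
`p ^ (k + 1 + l)`; lifting the exponent backwards yields `a ≡ b [MOD p ^ (l + 1)]`, i.e.
`x ≡ y [MOD p ^ l]`. So the map is injective on `[0, p ^ l)`, hence bijective.
-/

theorem Nat.modEq_mul_of_modEq_of_div_modEq {a b n m : ℕ} (hmod : a ≡ b [MOD n])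
    (hdiv : a / n ≡ b / n [MOD m]) : a ≡ b [MOD n * m] := by
  have h := (hdiv.mul_left' n).add_right (a % n)
  rwa [Nat.div_add_mod, show a % n = b % n from hmod, Nat.div_add_mod] at h

theorem Int.pow_prime_pow_modEq_pow_prime_pow_iff {p : ℕ} (hp : p.Prime) (hodd : Odd p)
    {a b : ℤ} (hab : a ≡ b [ZMOD p]) (ha : ¬(p : ℤ) ∣ a) (n k : ℕ) :
    a ^ p ^ k ≡ b ^ p ^ k [ZMOD (p : ℤ) ^ (n + k)] ↔ a ≡ b [ZMOD (p : ℤ) ^ n] := by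
  rw [Int.modEq_comm, Int.modEq_iff_dvd, Int.modEq_comm, Int.modEq_iff_dvd,
    pow_dvd_iff_le_emultiplicity, pow_dvd_iff_le_emultiplicity,
    Int.emultiplicity_pow_sub_pow hp hodd hab.symm.dvd ha,
    emultiplicity_pow_self_of_prime hp.prime k, Nat.cast_add]
  exact WithTop.add_le_add_iff_right (ENat.natCast_ne_top k)

theorem Nat.pow_prime_pow_modEq_pow_prime_pow_iff {p : ℕ} (hp : p.Prime) (hodd : Odd p)
    {a b : ℕ} (hab : a ≡ b [MOD p]) (ha : ¬p ∣ a) (n k : ℕ) :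
    a ^ p ^ k ≡ b ^ p ^ k [MOD p ^ (n + k)] ↔ a ≡ b [MOD p ^ n] := by
  simpa only [← Nat.cast_pow, Int.natCast_modEq_iff] using
    Int.pow_prime_pow_modEq_pow_prime_pow_iff hp hodd (Int.natCast_modEq_iff.mpr hab)
      (by exact_mod_cast ha) n k

theorem power_coding_odd_prime_pow_general (p : ℕ) (hp : p.Prime) (hodd : p ≠ 2)
    (l : ℕ) (k : ℕ)
    (r : ℕ) (hr0 : 0 < r) (hrp : r < p) :
    Set.BijOn (fun x' : ℕ => ((p * x' + r) ^ p ^ k / p ^ (k + 1)) % p ^ l)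
      (Set.Iio (p ^ l)) (Set.Iio (p ^ l)) := by
  refine ((Set.finite_Iio _).injOn_iff_bijOn_of_mapsTo
    fun x _ => Nat.mod_lt _ (pow_pos hp.pos l)).mp ?_
  intro x hx y hy hxy
  have hndvd : ¬p ∣ p * x + r := by
    rw [Nat.dvd_add_right (dvd_mul_right p x)]
    exact Nat.not_dvd_of_pos_of_lt hr0 hrp
  have hmodp : p * x + r ≡ p * y + r [MOD p] := by
    simp only [Nat.ModEq, Nat.mul_add_mod]
  have lte := Nat.pow_prime_pow_modEq_pow_prime_pow_iff hp (hp.odd_of_ne_two hodd) hmodp hndvd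
  have hlow : (p * x + r) ^ p ^ k ≡ (p * y + r) ^ p ^ k [MOD p ^ (k + 1)] := by
    rw [add_comm k]
    exact (lte 1 k).mpr (by rwa [pow_one])
  have hfull : (p * x + r) ^ p ^ k ≡ (p * y + r) ^ p ^ k [MOD p ^ (l + 1 + k)] := by
    have h := Nat.modEq_mul_of_modEq_of_div_modEq hlow hxy
    rwa [← pow_add, show k + 1 + l = l + 1 + k by ring] at h
  have hpxy : p * x ≡ p * y [MOD p * p ^ l] := by
    rw [← pow_succ']
    exact ((lte (l + 1) k).mp hfull).add_right_cancel' r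
  exact ((Nat.ModEq.mul_left_cancel_iff' hp.ne_zero).mp hpxy).eq_of_lt_of_lt hx hy

theorem power_coding_odd_prime_pow (p : ℕ) (hp : p.Prime) (hodd : p ≠ 2)
    (l : ℕ) (hl : 1 ≤ l) (k : ℕ) (hk : 1 ≤ k)
    (r : ℕ) (hr0 : 0 < r) (hrp : r < p) :
    Set.BijOn (fun x' : ℕ => ((p * x' + r) ^ p ^ k / p ^ (k + 1)) % p ^ l)
      (Set.Iio (p ^ l)) (Set.Iio (p ^ l)) :=
  power_coding_odd_prime_pow_general p hp hodd l k r hr0 hrp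
end

section
/- Let l ≥ 1 and k ≥ 1. The map C : {0, ..., 2^l − 1} → {0, ..., 2^l − 1} defined by C(x') = ⌊(2·x' + 1)^{2^k} / 2^{k+2}⌋ mod 2^l is a bijection. -/
lemma aux_pow_two_pow_four (a : ℤ) (ha : Odd a) :
    ∀ j : ℕ, 1 ≤ j → ∃ m : ℤ, a ^ 2 ^ j = 4 * m + 1 := by
  intro j
  induction j with
  | zero => omega
  | succ n ih =>
    intro _
    rcases Nat.eq_zero_or_pos n with h | h
    · subst h
      obtain ⟨t, ht⟩ := ha
      exact ⟨t * t + t, by rw [ht]; ring⟩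
    · obtain ⟨m, hm⟩ := ih h
      refine ⟨4 * m ^ 2 + 2 * m, ?_⟩
      have h2 : a ^ 2 ^ (n + 1) = (a ^ 2 ^ n) ^ 2 := by
        rw [← pow_mul, pow_succ]
      rw [h2, hm]; ring

lemma aux_pow_sub_one (a : ℤ) (ha : Odd a) :
    ∀ k : ℕ, 1 ≤ k → (2 : ℤ) ^ (k + 2) ∣ a ^ 2 ^ k - 1 := by
  intro k
  induction k with
  | zero => omega
  | succ n ih =>
    intro _
    rcases Nat.eq_zero_or_pos n with h | h
    · subst h
      obtain ⟨t, ht⟩ := ha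
      rcases Int.even_mul_succ_self t with ⟨u, hu⟩
      refine ⟨u, ?_⟩
      have : a ^ 2 ^ 1 - 1 = 4 * (t * (t + 1)) := by rw [ht]; ring
      rw [this, show t * (t + 1) = u + u from hu]; ring
    · obtain ⟨c, hc⟩ := ih h
      obtain ⟨m, hm⟩ := aux_pow_two_pow_four a ha n h
      refine ⟨c * (2 * m + 1), ?_⟩
      have hfac : a ^ 2 ^ (n + 1) - 1 = (a ^ 2 ^ n - 1) * (a ^ 2 ^ n + 1) := by
        have h2 : a ^ 2 ^ (n + 1) = (a ^ 2 ^ n) ^ 2 := by rw [← pow_mul, pow_succ]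
        rw [h2]; ring
      rw [hfac, hc, hm, show (4 : ℤ) * m + 1 + 1 = 2 * (2 * m + 1) by ring]
      rw [pow_succ]
      ring

lemma aux_coprime_odd (n : ℕ) (e : ℤ) (he : Odd e) : IsCoprime ((2 : ℤ) ^ n) e := by
  obtain ⟨f, hf⟩ := he
  exact IsCoprime.pow_left ⟨-f, 1, by rw [hf]; ring⟩

lemma aux_descent (l : ℕ) (a b : ℤ) (ha : Odd a) (hb : Odd b) :
    ∀ j : ℕ, 1 ≤ j → (2 : ℤ) ^ (l + j + 2) ∣ a ^ 2 ^ j - b ^ 2 ^ j →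
      (2 : ℤ) ^ (l + 3) ∣ a ^ 2 - b ^ 2 := by
  intro j
  induction j with
  | zero => omega
  | succ n ih =>
    intro _ hdvd
    rcases Nat.eq_zero_or_pos n with h | h
    · subst h
      simpa [pow_one] using hdvd
    · obtain ⟨m, hm⟩ := aux_pow_two_pow_four a ha n h
      obtain ⟨m', hm'⟩ := aux_pow_two_pow_four b hb n h
      set c := a ^ 2 ^ n - b ^ 2 ^ n with hc
      have hfac : a ^ 2 ^ (n + 1) - b ^ 2 ^ (n + 1) = c * (a ^ 2 ^ n + b ^ 2 ^ n) := by
        have h2 : ∀ z : ℤ, z ^ 2 ^ (n + 1) = (z ^ 2 ^ n) ^ 2 := fun z => by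
          rw [← pow_mul, pow_succ]
        rw [h2, h2, hc]; ring
      have hsum : a ^ 2 ^ n + b ^ 2 ^ n = 2 * (2 * (m + m') + 1) := by
        rw [hm, hm']; ring
      have h1 : (2 : ℤ) ^ (l + n + 2) * 2 ∣ (c * (2 * (m + m') + 1)) * 2 := by
        have : (2 : ℤ) ^ (l + (n + 1) + 2) = 2 ^ (l + n + 2) * 2 := by
          rw [show l + (n + 1) + 2 = (l + n + 2) + 1 by ring, pow_succ]
        rw [← this]
        calc (2 : ℤ) ^ (l + (n + 1) + 2) ∣ a ^ 2 ^ (n + 1) - b ^ 2 ^ (n + 1) := hdvd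
          _ = (c * (2 * (m + m') + 1)) * 2 := by rw [hfac, hsum]; ring
      have h2 : (2 : ℤ) ^ (l + n + 2) ∣ c * (2 * (m + m') + 1) :=
        (mul_dvd_mul_iff_right (two_ne_zero)).mp h1
      have h3 : (2 : ℤ) ^ (l + n + 2) ∣ c :=
        (aux_coprime_odd _ _ ⟨m + m', rfl⟩).dvd_of_dvd_mul_right h2
      exact ih h h3

lemma aux_key_inj (l k : ℕ) (hl : 1 ≤ l) (hk : 1 ≤ k) (x y : ℕ)
    (hx : x < 2 ^ l) (hy : y < 2 ^ l)
    (h : (2 : ℤ) ^ (l + k + 2) ∣ (2 * (x : ℤ) + 1) ^ 2 ^ k - (2 * (y : ℤ) + 1) ^ 2 ^ k) :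
    x = y := by
  have h3 := aux_descent l _ _ ⟨(x : ℤ), by ring⟩ ⟨(y : ℤ), by ring⟩ k hk h
  have heq : (2 * (x : ℤ) + 1) ^ 2 - (2 * (y : ℤ) + 1) ^ 2
      = 2 ^ 2 * (((x : ℤ) - y) * ((x : ℤ) + y + 1)) := by ring
  have h4 : (2 : ℤ) ^ (l + 1) ∣ ((x : ℤ) - y) * ((x : ℤ) + y + 1) := by
    have hsplit : (2 : ℤ) ^ (l + 3) = 2 ^ 2 * 2 ^ (l + 1) := by
      rw [← pow_add]; ring_nf
    rw [heq, hsplit] at h3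
    exact (mul_dvd_mul_iff_left (by positivity : (2 : ℤ) ^ 2 ≠ 0)).mp h3
  rcases Nat.even_or_odd (x + y) with he | ho
  · obtain ⟨t, ht⟩ := he
    have hodd : Odd ((x : ℤ) + y + 1) := ⟨(t : ℤ), by push_cast; omega⟩
    have h5 : (2 : ℤ) ^ (l + 1) ∣ (x : ℤ) - y :=
      (aux_coprime_odd _ _ hodd).dvd_of_dvd_mul_right h4
    have habs : |(x : ℤ) - y| < 2 ^ (l + 1) := by
      have hx' : (x : ℤ) < 2 ^ l := by exact_mod_cast hx
      have hy' : (y : ℤ) < 2 ^ l := by exact_mod_cast hy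
      have hll : (2 : ℤ) ^ (l + 1) = 2 ^ l + 2 ^ l := by rw [pow_succ]; ring
      rw [abs_sub_lt_iff]
      omega
    have := Int.eq_zero_of_abs_lt_dvd h5 habs
    omega
  · obtain ⟨t, ht⟩ := ho
    have hodd : Odd ((x : ℤ) - y) := ⟨(t : ℤ) - y, by push_cast; omega⟩
    have h5 : (2 : ℤ) ^ (l + 1) ∣ (x : ℤ) + y + 1 :=
      (aux_coprime_odd _ _ hodd).dvd_of_dvd_mul_left h4
    have hpos : (0 : ℤ) < (x : ℤ) + y + 1 := by positivity
    have := Int.le_of_dvd hpos h5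
    have hb : (x : ℤ) + y + 1 < 2 ^ (l + 1) := by
      have hx' : (x : ℤ) < 2 ^ l := by exact_mod_cast hx
      have hy' : (y : ℤ) < 2 ^ l := by exact_mod_cast hy
      have : (2 : ℤ) ^ (l + 1) = 2 ^ l + 2 ^ l := by rw [pow_succ]; ring
      omega
    omega

lemma aux_mod_one (x k : ℕ) (hk : 1 ≤ k) : (2 * x + 1) ^ 2 ^ k % 2 ^ (k + 2) = 1 := by
  obtain ⟨c, hc⟩ := aux_pow_sub_one (2 * (x : ℤ) + 1) ⟨(x : ℤ), by ring⟩ k hk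
  set A := (2 * x + 1) ^ 2 ^ k with hA
  have hAZ : ((A : ℕ) : ℤ) = (2 * (x : ℤ) + 1) ^ 2 ^ k := by
    rw [hA, Nat.cast_pow]; push_cast; ring
  have hc' : ((A : ℕ) : ℤ) = 2 ^ (k + 2) * c + 1 := by rw [hAZ]; omega
  have hc0 : 0 ≤ c := by
    have h1 : (1 : ℤ) ≤ (A : ℤ) := by exact_mod_cast Nat.one_le_iff_ne_zero.mpr (by positivity)
    nlinarith [pow_pos (by norm_num : (0:ℤ) < 2) (k + 2)]
  obtain ⟨d, rfl⟩ := Int.eq_ofNat_of_zero_le hc0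
  have hAn : A = 2 ^ (k + 2) * d + 1 := by exact_mod_cast hc'
  rw [hAn, Nat.mul_add_mod]
  have : 1 < 2 ^ (k + 2) := by
    have := Nat.one_lt_two_pow (n := k + 2) (by omega)
    exact this
  exact Nat.mod_eq_of_lt this

theorem power_coding_two_pow (l : ℕ) (hl : 1 ≤ l) (k : ℕ) (hk : 1 ≤ k) :
    Set.BijOn (fun x' : ℕ => ((2 * x' + 1) ^ 2 ^ k / 2 ^ (k + 2)) % 2 ^ l)
      (Set.Iio (2 ^ l)) (Set.Iio (2 ^ l)) := by
  have hmaps : Set.MapsTo (fun x' : ℕ => ((2 * x' + 1) ^ 2 ^ k / 2 ^ (k + 2)) % 2 ^ l)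
      (Set.Iio (2 ^ l)) (Set.Iio (2 ^ l)) := by
    intro x _
    exact Nat.mod_lt _ (by positivity)
  have hinj : Set.InjOn (fun x' : ℕ => ((2 * x' + 1) ^ 2 ^ k / 2 ^ (k + 2)) % 2 ^ l)
      (Set.Iio (2 ^ l)) := by
    intro x hx y hy hxy
    simp only [Set.mem_Iio] at hx hy
    simp only at hxy
    set qa := (2 * x + 1) ^ 2 ^ k / 2 ^ (k + 2) with hqa
    set qb := (2 * y + 1) ^ 2 ^ k / 2 ^ (k + 2) with hqb
    have hAm := aux_mod_one x k hk
    have hBm := aux_mod_one y k hk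
    have hA : (2 * x + 1) ^ 2 ^ k = 2 ^ (k + 2) * qa + 1 := by
      conv_lhs => rw [← Nat.div_add_mod ((2 * x + 1) ^ 2 ^ k) (2 ^ (k + 2))]
      rw [hAm]
    have hB : (2 * y + 1) ^ 2 ^ k = 2 ^ (k + 2) * qb + 1 := by
      conv_lhs => rw [← Nat.div_add_mod ((2 * y + 1) ^ 2 ^ k) (2 ^ (k + 2))]
      rw [hBm]
    have hmeq : qa ≡ qb [MOD 2 ^ l] := hxy
    have hdvd1 : (2 : ℤ) ^ l ∣ (qb : ℤ) - (qa : ℤ) := by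
      have := hmeq.dvd
      exact_mod_cast this
    have hdvd2 : (2 : ℤ) ^ (l + k + 2) ∣
        (2 * (x : ℤ) + 1) ^ 2 ^ k - (2 * (y : ℤ) + 1) ^ 2 ^ k := by
      obtain ⟨c, hc⟩ := hdvd1
      refine ⟨-c, ?_⟩
      have hAZ : (2 * (x : ℤ) + 1) ^ 2 ^ k = 2 ^ (k + 2) * (qa : ℤ) + 1 := by
        exact_mod_cast congrArg (Nat.cast : ℕ → ℤ) hA
      have hBZ : (2 * (y : ℤ) + 1) ^ 2 ^ k = 2 ^ (k + 2) * (qb : ℤ) + 1 := by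
        exact_mod_cast congrArg (Nat.cast : ℕ → ℤ) hB
      rw [hAZ, hBZ, show (2 : ℤ) ^ (l + k + 2) = 2 ^ (k + 2) * 2 ^ l by
        rw [← pow_add]; ring_nf]
      linear_combination (-(2 : ℤ) ^ (k + 2)) * hc
    exact aux_key_inj l k hl hk x y hx hy hdvd2
  exact ((Set.finite_Iio _).injOn_iff_bijOn_of_mapsTo hmaps).mp hinj
end

section
/- Let p be a prime, l ≥ 1, and n = q·p^k with gcd(q, p) = 1 and k ≥ 0. Set α = 1 + k + [p = 2 and k > 0] (i.e., α = 1 + k, plus an extra 1 exactly when p = 2 and k ≥ 1). Then for each residue r with 0 < r < p, the map C_r : {0, ..., p^l − 1} → {0, ..., p^l − 1} defined by C_r(x') = ⌊(p·x' + r)^n / p^α⌋ mod p^l is a bijection. -/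
/-!
Write `X = p x' + r`, `Y = p y' + r`; these are prime to `p` and congruent mod `p`, so lifting the
exponent gives `α ≤ v_p(X^n - Y^n)`: the powers agree mod `p^α`, and `C_r` reads the next `l`
base-`p` digits. Hence `C_r x' = C_r y'` forces `X^n ≡ Y^n (mod p^(α + l))`. For `x' ≠ y'` below
`p^l`, lifting the exponent also gives `v_p(X^n - Y^n) < α + l`, since `X, Y < p^(l + 1)`; for
`p = 2` one uses that `v_2(X + Y)` and `v_2(X - Y)` are at most `l + 1` and one of them is `1`.
So `C_r` is injective on the finite set `{0, …, p^l - 1}`, hence bijective.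
-/

theorem Nat.ModEq.mul_of_div_modEq {a b m n : ℕ} (h : a ≡ b [MOD m])
    (hdiv : a / m ≡ b / m [MOD n]) : a ≡ b [MOD m * n] := by
  unfold Nat.ModEq at *
  rw [Nat.mod_mul, Nat.mod_mul, h, hdiv]

theorem padicValNat_le_of_lt_pow {p m l : ℕ} (hm : m ≠ 0) (hml : m < p ^ (l + 1)) :
    padicValNat p m ≤ l :=
  Nat.lt_succ_iff.1 ((padicValNat_le_nat_log m).trans_lt (Nat.log_lt_of_lt_pow hm hml))

namespace padicValNat

variable {x y n : ℕ}

theorem pow_sub_pow_of_not_dvd {p : ℕ} [hp : Fact p.Prime] (hyx : y < x) (hxy : p ∣ x - y)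
    (hx : ¬p ∣ x) (hn : ¬p ∣ n) : padicValNat p (x ^ n - y ^ n) = padicValNat p (x - y) := by
  have hn0 : n ≠ 0 := by rintro rfl; exact hn (dvd_zero p)
  rw [← Nat.cast_inj (R := ℕ∞),
    padicValNat_eq_emultiplicity (Nat.sub_ne_zero_of_lt (Nat.pow_lt_pow_left hyx hn0)),
    padicValNat_eq_emultiplicity (Nat.sub_ne_zero_of_lt hyx), ← Int.natCast_emultiplicity,
    ← Int.natCast_emultiplicity, Nat.cast_sub hyx.le, Nat.cast_sub (Nat.pow_le_pow_left hyx.le n)]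
  push_cast
  rw [← Int.natCast_dvd_natCast] at hx hn
  exact emultiplicity_pow_sub_pow_of_prime (Nat.prime_iff_prime_int.1 hp.out)
    (by rwa [← Int.natCast_dvd_natCast, Nat.cast_sub hyx.le] at hxy) hx hn

theorem pow_sub_pow_of_ne_two_or_odd {p : ℕ} [hp : Fact p.Prime] (hpn : p ≠ 2 ∨ Odd n)
    (hyx : y < x) (hxy : p ∣ x - y) (hx : ¬p ∣ x) (hn : n ≠ 0) :
    padicValNat p (x ^ n - y ^ n) = padicValNat p (x - y) + padicValNat p n := by
  by_cases hp2 : p = 2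
  · subst hp2
    have hpn : ¬2 ∣ n := (hpn.resolve_left (not_not_intro rfl)).not_two_dvd_nat
    rw [pow_sub_pow_of_not_dvd hyx hxy hx hpn, eq_zero_of_not_dvd hpn, add_zero]
  · exact pow_sub_pow (hp.out.odd_of_ne_two hp2) hyx hxy hx hn

theorem three_le_two_add_add_two_sub (hyx : y < x) (hxy : 2 ∣ x - y) (hx : ¬2 ∣ x) :
    3 ≤ padicValNat 2 (x + y) + padicValNat 2 (x - y) := by
  have hsum : x + y ≠ 0 := by omega
  have hdiff : x - y ≠ 0 := by omega
  have h1 := one_le_padicValNat_of_dvd hsum (by omega : 2 ∣ x + y)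
  have h2 := one_le_padicValNat_of_dvd hdiff hxy
  rcases (by omega : 2 ^ 2 ∣ x + y ∨ 2 ^ 2 ∣ x - y) with h | h
  · have := (padicValNat_dvd_iff_le hsum).1 h; omega
  · have := (padicValNat_dvd_iff_le hdiff).1 h; omega

theorem two_add_add_two_sub_le {l : ℕ} (hyx : y < x) (hxl : x < 2 ^ (l + 1))
    (hxy : 2 ∣ x - y) (hx : ¬2 ∣ x) :
    padicValNat 2 (x + y) + padicValNat 2 (x - y) ≤ l + 2 := by
  have hsum : x + y ≠ 0 := by omega
  have hdiff : x - y ≠ 0 := by omega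
  have h1 := padicValNat_le_of_lt_pow hsum (by rw [pow_succ]; omega : x + y < 2 ^ (l + 1 + 1))
  have h2 := padicValNat_le_of_lt_pow hdiff (by rw [pow_succ]; omega : x - y < 2 ^ (l + 1 + 1))
  -- `x + y` and `x - y` differ by `2 * y` with `y` odd
  have hmin : ¬(2 ^ 2 ∣ x + y ∧ 2 ^ 2 ∣ x - y) := by omega
  rw [padicValNat_dvd_iff_le hsum, padicValNat_dvd_iff_le hdiff] at hmin
  omega

end padicValNat

/-- The exponent `α` of the theorem, with `k = v_p(n)`: by lifting the exponent it is the least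
value of `v_p(x^n - y^n)` for `x ≡ y (mod p)` prime to `p`. -/
def codingShift (p k : ℕ) : ℕ := 1 + k + if p = 2 ∧ 0 < k then 1 else 0

section

variable {p x y n l : ℕ} [Fact p.Prime]

theorem padicValNat_pow_sub_pow_mem_Ico (hyx : y < x) (hxl : x < p ^ (l + 1))
    (hxy : p ∣ x - y) (hx : ¬p ∣ x) (hn : n ≠ 0) :
    padicValNat p (x ^ n - y ^ n) ∈
      Set.Ico (codingShift p (padicValNat p n)) (codingShift p (padicValNat p n) + l) := by
  rw [Set.mem_Ico, codingShift]
  by_cases h2 : p = 2 ∧ Even n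
  · obtain ⟨rfl, heven⟩ := h2
    have hk : 0 < padicValNat 2 n := one_le_padicValNat_of_dvd hn (even_iff_two_dvd.1 heven)
    have hlte := padicValNat.pow_two_sub_pow hyx hxy hx hn heven
    have hlow := padicValNat.three_le_two_add_add_two_sub hyx hxy hx
    have hhigh := padicValNat.two_add_add_two_sub_le hyx hxl hxy hx
    rw [if_pos ⟨rfl, hk⟩]
    omega
  · have hk : ¬(p = 2 ∧ 0 < padicValNat p n) := by
      rintro ⟨rfl, hk⟩
      exact h2 ⟨rfl, even_iff_two_dvd.2 (dvd_of_one_le_padicValNat hk)⟩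
    have hpn : p ≠ 2 ∨ Odd n := by
      rw [← Nat.not_even_iff_odd, ← not_and_or]
      exact h2
    have hdiff : x - y ≠ 0 := Nat.sub_ne_zero_of_lt hyx
    have hlow := one_le_padicValNat_of_dvd hdiff hxy
    have hhigh := padicValNat_le_of_lt_pow hdiff (by omega : x - y < p ^ (l + 1))
    rw [if_neg hk, padicValNat.pow_sub_pow_of_ne_two_or_odd hpn hyx hxy hx hn]
    omega

theorem pow_div_pow_codingShift_not_modEq (hyx : y < x) (hxl : x < p ^ (l + 1))
    (hxy : p ∣ x - y) (hx : ¬p ∣ x) (hn : n ≠ 0) :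
    ¬x ^ n / p ^ codingShift p (padicValNat p n) ≡
      y ^ n / p ^ codingShift p (padicValNat p n) [MOD p ^ l] := by
  intro heq
  obtain ⟨hlow, hhigh⟩ := padicValNat_pow_sub_pow_mem_Ico hyx hxl hxy hx hn
  have hle : y ^ n ≤ x ^ n := Nat.pow_le_pow_left hyx.le n
  have hsub : x ^ n - y ^ n ≠ 0 := Nat.sub_ne_zero_of_lt (Nat.pow_lt_pow_left hyx hn)
  have hmod : y ^ n ≡ x ^ n [MOD p ^ codingShift p (padicValNat p n)] :=
    (Nat.modEq_iff_dvd' hle).2 ((padicValNat_dvd_iff_le hsub).2 hlow)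
  have hdvd := (Nat.modEq_iff_dvd' hle).1 (hmod.mul_of_div_modEq heq.symm)
  rw [← pow_add, padicValNat_dvd_iff_le hsub] at hdvd
  omega

end

theorem power_coding_theorem_general (p : ℕ) (hp : p.Prime) (l : ℕ)
    (n q k : ℕ) (hnqk : n = q * p ^ k) (hq : ¬ p ∣ q)
    (r : ℕ) (hr0 : 0 < r) (hrp : r < p) :
    Set.BijOn
      (fun x' : ℕ =>
        ((p * x' + r) ^ n / p ^ (1 + k + if p = 2 ∧ 0 < k then 1 else 0)) % p ^ l)
      (Set.Iio (p ^ l)) (Set.Iio (p ^ l)) := by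
  have := Fact.mk hp
  have hq0 : q ≠ 0 := by rintro rfl; exact hq (dvd_zero p)
  have hn : n ≠ 0 := hnqk ▸ mul_ne_zero hq0 (pow_ne_zero k hp.ne_zero)
  have hk : padicValNat p n = k := by
    rw [hnqk, padicValNat.mul hq0 (pow_ne_zero k hp.ne_zero), padicValNat.eq_zero_of_not_dvd hq,
      padicValNat.prime_pow, zero_add]
  have hpX : ∀ x', ¬p ∣ p * x' + r := fun x' h =>
    absurd (Nat.le_of_dvd hr0 ((Nat.dvd_add_right (dvd_mul_right p x')).1 h)) (by omega)
  refine ((Set.finite_Iio _).injOn_iff_bijOn_of_mapsTo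
    fun _ _ => Nat.mod_lt _ (pow_pos hp.pos l)).1 ?_
  intro x' hx' y' hy' heq
  by_contra hne
  wlog hlt : y' < x' generalizing x' y'
  · exact this hy' hx' heq.symm (Ne.symm hne) (by omega)
  have hYX : p * y' + r < p * x' + r := by gcongr; exact hp.pos
  have hXl : p * x' + r < p ^ (l + 1) :=
    calc p * x' + r < p * (x' + 1) := by rw [mul_add_one]; omega
      _ ≤ p * p ^ l := Nat.mul_le_mul_left p hx'
      _ = p ^ (l + 1) := (pow_succ' p l).symm
  have hXY : p ∣ (p * x' + r) - (p * y' + r) :=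
    ⟨x' - y', by rw [Nat.add_sub_add_right, Nat.mul_sub]⟩
  exact pow_div_pow_codingShift_not_modEq hYX hXl hXY (hpX x') hn (hk ▸ heq)

theorem power_coding_theorem (p : ℕ) (hp : p.Prime) (l : ℕ) (hl : 1 ≤ l)
    (n q k : ℕ) (hn : 0 < n) (hnqk : n = q * p ^ k) (hq : ¬ p ∣ q)
    (r : ℕ) (hr0 : 0 < r) (hrp : r < p) :
    Set.BijOn
      (fun x' : ℕ =>
        ((p * x' + r) ^ n / p ^ (1 + k + if p = 2 ∧ 0 < k then 1 else 0)) % p ^ l)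
      (Set.Iio (p ^ l)) (Set.Iio (p ^ l)) :=
  power_coding_theorem_general p hp l n q k hnqk hq r hr0 hrp
end

section
/- Let l ≥ 1. The map C : {0, ..., 2^l − 1} → {0, ..., 2^l − 1} defined by C(x') = (x'(x' + 1)/2) mod 2^l is a bijection. -/
/-!
If `x(x+1)/2 ≡ y(y+1)/2 (mod 2^l)` then `2^(l+1)` divides `x(x+1) - y(y+1) = (x - y)(x + y + 1)`.
The two factors have odd sum `2x + 1`, so one of them is odd and `2^(l+1)` divides the other.
For `x, y < 2^l` both factors are smaller than `2^(l+1)` in absolute value and `x + y + 1 ≠ 0`,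
which forces `x = y`. An injective self-map of a finite set is a bijection.
-/

theorem Int.two_pow_dvd_or_two_pow_dvd_of_odd_add {a b : ℤ} {k : ℕ} (hab : Odd (a + b))
    (h : 2 ^ k ∣ a * b) : 2 ^ k ∣ a ∨ 2 ^ k ∣ b := by
  rcases Int.even_or_odd a with ha | ha
  · have hb : Odd b := by simpa using hab.sub_even ha
    exact .inl ((Int.isCoprime_two_left.2 hb).pow_left.dvd_of_dvd_mul_right h)
  · exact .inr ((Int.isCoprime_two_left.2 ha).pow_left.dvd_of_dvd_mul_left h)

theorem Nat.ModEq.mul_succ_self_of_div_two {n x y : ℕ}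
    (h : x * (x + 1) / 2 ≡ y * (y + 1) / 2 [MOD n]) : x * (x + 1) ≡ y * (y + 1) [MOD 2 * n] := by
  have h2 := h.mul_left' 2
  rwa [Nat.mul_div_cancel' (Nat.even_mul_succ_self x).two_dvd,
    Nat.mul_div_cancel' (Nat.even_mul_succ_self y).two_dvd] at h2

theorem injOn_triangular_mod_two_pow (l : ℕ) :
    Set.InjOn (fun x : ℕ => x * (x + 1) / 2 % 2 ^ l) (Set.Iio (2 ^ l)) := by
  intro x (hx : x < 2 ^ l) y (hy : y < 2 ^ l) hxy
  have hdvd : (2 ^ (l + 1) : ℤ) ∣ (y - x) * (y + x + 1) := by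
    have := Nat.modEq_iff_dvd.1 (Nat.ModEq.mul_succ_self_of_div_two hxy)
    convert this using 1 <;> push_cast <;> ring
  have hodd : Odd ((y - x : ℤ) + (y + x + 1)) := ⟨y, by ring⟩
  have hx' : (x : ℤ) < 2 ^ l := by exact_mod_cast hx
  have hy' : (y : ℤ) < 2 ^ l := by exact_mod_cast hy
  rcases Int.two_pow_dvd_or_two_pow_dvd_of_odd_add hodd hdvd with hd | hd <;>
  · have := Int.eq_zero_of_abs_lt_dvd hd (by rw [abs_lt, pow_succ]; constructor <;> linarith)
    omega

theorem triangular_coding_bijection_general (l : ℕ) :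
    Set.BijOn (fun x' : ℕ => (x' * (x' + 1) / 2) % 2 ^ l)
      (Set.Iio (2 ^ l)) (Set.Iio (2 ^ l)) :=
  ((Set.finite_Iio _).injOn_iff_bijOn_of_mapsTo fun _ _ => Nat.mod_lt _ (by positivity)).1
    (injOn_triangular_mod_two_pow l)

theorem triangular_coding_bijection (l : ℕ) (hl : 1 ≤ l) :
    Set.BijOn (fun x' : ℕ => (x' * (x' + 1) / 2) % 2 ^ l)
      (Set.Iio (2 ^ l)) (Set.Iio (2 ^ l)) :=
  triangular_coding_bijection_general l
end
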